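/- arXiv:2303.06496 — 8 statements merged into one kernel-verified Lean document; each statement's English description precedes it below -/
import Mathlib

section
/- Let K ≥ 0, let g_0, …, g_K be pairwise distinct positive real numbers, and let β_ℓ = ∏_{m ≠ ℓ} g_m / (g_m − g_ℓ). Then for every integer k ≥ K + 1, the sign of ∑_{ℓ=0}^{K} β_ℓ g_ℓ^k equals (−1)^K; that is, (−1)^K ∑_{ℓ=0}^{K} β_ℓ g_ℓ^k > 0. -/
open Finset Polynomial

noncomputable def dd {ι : Type*} [DecidableEq ι] (v : ι → ℝ) (s : Finset ι) (n : ℕ) : ℝ :=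
  ∑ ℓ ∈ s, v ℓ ^ n * ∏ m ∈ s.erase ℓ, (v ℓ - v m)⁻¹

lemma dd_card_zero {ι : Type*} [DecidableEq ι] {v : ι → ℝ} {s : Finset ι}
    (hvs : Set.InjOn v s) (hs : 2 ≤ s.card) :
    ∑ ℓ ∈ s, ∏ m ∈ s.erase ℓ, (v ℓ - v m)⁻¹ = 0 := by
  have hne : s.Nonempty := Finset.card_pos.mp (by omega)
  have h := Lagrange.sum_basis hvs hne
  have h2 := congrArg (fun p : Polynomial ℝ => p.coeff (s.card - 1)) h
  simp only [Polynomial.finset_sum_coeff] at h2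
  have hb : ∀ ℓ ∈ s, (Lagrange.basis s v ℓ).coeff (s.card - 1)
      = ∏ m ∈ s.erase ℓ, (v ℓ - v m)⁻¹ := by
    intro ℓ hℓ
    rw [Lagrange.basis_eq_prod_sub_inv_mul_nodal_div hℓ, ← Lagrange.nodal_erase_eq_nodal_div hℓ,
      Polynomial.coeff_C_mul]
    have hd : (Lagrange.nodal (s.erase ℓ) v).natDegree = s.card - 1 := by
      rw [Lagrange.natDegree_nodal, Finset.card_erase_of_mem hℓ]
    have hm : (Lagrange.nodal (s.erase ℓ) v).coeff (s.card - 1) = 1 := by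
      rw [← hd]; exact Lagrange.nodal_monic.coeff_natDegree
    rw [hm, mul_one]; rfl
  rw [Finset.sum_congr rfl hb] at h2
  rw [h2]
  simp only [Polynomial.coeff_one]
  rw [if_neg (by omega)]

lemma dd_rec {ι : Type*} [DecidableEq ι] {v : ι → ℝ} {s : Finset ι}
    (hvs : Set.InjOn v s) {i : ι} (hi : i ∈ s) (n : ℕ) :
    dd v s (n + 1) = v i * dd v s n + dd v (s.erase i) n := by
  have key : dd v s (n + 1) - v i * dd v s n = dd v (s.erase i) n := by
    unfold dd
    rw [Finset.mul_sum, ← Finset.sum_sub_distrib]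
    have hcongr : ∀ ℓ ∈ s,
        v ℓ ^ (n + 1) * ∏ m ∈ s.erase ℓ, (v ℓ - v m)⁻¹
          - v i * (v ℓ ^ n * ∏ m ∈ s.erase ℓ, (v ℓ - v m)⁻¹)
        = (v ℓ - v i) * (v ℓ ^ n * ∏ m ∈ s.erase ℓ, (v ℓ - v m)⁻¹) := by
      intro ℓ _; ring
    rw [Finset.sum_congr rfl hcongr,
      ← Finset.add_sum_erase _ (fun ℓ => (v ℓ - v i) * (v ℓ ^ n * ∏ m ∈ s.erase ℓ, (v ℓ - v m)⁻¹)) hi]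
    simp only [sub_self, zero_mul, zero_add]
    refine Finset.sum_congr rfl fun ℓ hℓ => ?_
    obtain ⟨hℓi, hℓs⟩ := Finset.mem_erase.mp hℓ
    have hiℓ : i ∈ s.erase ℓ := Finset.mem_erase.mpr ⟨fun h => hℓi h.symm, hi⟩
    rw [← Finset.mul_prod_erase _ _ hiℓ, Finset.erase_right_comm]
    have hne : v ℓ - v i ≠ 0 := sub_ne_zero_of_ne (fun h => hℓi (hvs hℓs hi h))
    rw [show (v ℓ - v i) * (v ℓ ^ n * ((v ℓ - v i)⁻¹ *
        ∏ m ∈ (s.erase i).erase ℓ, (v ℓ - v m)⁻¹))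
      = (v ℓ - v i) * (v ℓ - v i)⁻¹ * (v ℓ ^ n * ∏ m ∈ (s.erase i).erase ℓ, (v ℓ - v m)⁻¹)
      from by ring, mul_inv_cancel₀ hne, one_mul]
  linarith [key]

lemma dd_pos {ι : Type*} [DecidableEq ι] (v : ι → ℝ) :
    ∀ n : ℕ, ∀ s : Finset ι, Set.InjOn v s → (∀ i ∈ s, 0 < v i) →
      (n + 2 ≤ s.card → dd v s n = 0) ∧ (s.Nonempty → s.card ≤ n + 1 → 0 < dd v s n) := by
  intro n
  induction n with
  | zero =>
    intro s hinj hpos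
    constructor
    · intro h2
      unfold dd
      simp only [pow_zero, one_mul]
      exact dd_card_zero hinj h2
    · intro hne hc
      have h1 : s.card = 1 := le_antisymm hc hne.card_pos
      obtain ⟨i, rfl⟩ := Finset.card_eq_one.mp h1
      simp [dd]
  | succ n IH =>
    intro s hinj hpos
    have aux : ∀ i ∈ s, Set.InjOn v ↑(s.erase i) ∧ (∀ j ∈ s.erase i, 0 < v j) := by
      intro i _
      exact ⟨hinj.mono (Finset.coe_subset.mpr (Finset.erase_subset _ _)),
        fun j hj => hpos j (Finset.mem_of_mem_erase hj)⟩
    constructor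
    · intro h2
      have hne : s.Nonempty := Finset.card_pos.mp (by omega)
      obtain ⟨i, hi⟩ := hne
      obtain ⟨hsub, hpos'⟩ := aux i hi
      have h1 : dd v s n = 0 := (IH s hinj hpos).1 (by omega)
      have h2' : dd v (s.erase i) n = 0 :=
        (IH _ hsub hpos').1 (by rw [Finset.card_erase_of_mem hi]; omega)
      rw [dd_rec hinj hi n, h1, h2']; ring
    · intro hne hc
      obtain ⟨i, hi⟩ := hne
      obtain ⟨hsub, hpos'⟩ := aux i hi
      rw [dd_rec hinj hi n]
      by_cases hcc : s.card ≤ n + 1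
      · have h1 : 0 < dd v s n := (IH s hinj hpos).2 ⟨i, hi⟩ hcc
        have h2 : 0 ≤ dd v (s.erase i) n := by
          rcases Finset.eq_empty_or_nonempty (s.erase i) with he | hne'
          · rw [he]; unfold dd; simp
          · exact le_of_lt ((IH _ hsub hpos').2 hne'
              (by rw [Finset.card_erase_of_mem hi]; omega))
        have hvi := hpos i hi
        nlinarith
      · have h1 : dd v s n = 0 := (IH s hinj hpos).1 (by omega)
        have h2 : 0 < dd v (s.erase i) n :=
          (IH _ hsub hpos').2 (Finset.card_pos.mp (by rw [Finset.card_erase_of_mem hi]; omega))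
            (by rw [Finset.card_erase_of_mem hi]; omega)
        rw [h1, mul_zero, zero_add]; exact h2

/-- **Sign of the Richardson extrapolation moments beyond order `K`.**
Let `K ≥ 0`, let `g 0, …, g K` be pairwise distinct positive reals, and let
`β ℓ = ∏_{m ≠ ℓ} g m / (g m − g ℓ)`.  Then for every integer `k ≥ K + 1`,
`(−1)^K * ∑ ℓ, β ℓ * (g ℓ)^k > 0`, i.e. the sign of `∑ ℓ, β ℓ * (g ℓ)^k` is `(−1)^K`. -/
theorem richardson_moment_sign (K : ℕ) (g : Fin (K + 1) → ℝ)
    (hg_inj : Function.Injective g) (hg_pos : ∀ ℓ, 0 < g ℓ)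
    (β : Fin (K + 1) → ℝ)
    (hβ : ∀ ℓ, β ℓ = ∏ m ∈ Finset.univ.erase ℓ, g m / (g m - g ℓ))
    (k : ℕ) (hk : K + 1 ≤ k) :
    0 < (-1 : ℝ) ^ K * ∑ ℓ, β ℓ * g ℓ ^ k := by
  obtain ⟨j, rfl⟩ : ∃ j, k = j + 1 := ⟨k - 1, by omega⟩
  have hinj : Set.InjOn g ↑(Finset.univ : Finset (Fin (K + 1))) := hg_inj.injOn
  have hcard : (Finset.univ : Finset (Fin (K + 1))).card = K + 1 := by simp
  have hdd : 0 < dd g Finset.univ j :=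
    (dd_pos g j Finset.univ hinj (fun i _ => hg_pos i)).2 Finset.univ_nonempty (by omega)
  have hprod : 0 < ∏ ℓ, g ℓ := Finset.prod_pos (fun i _ => hg_pos i)
  have key : (∏ ℓ, g ℓ) * dd g Finset.univ j = (-1 : ℝ) ^ K * ∑ ℓ, β ℓ * g ℓ ^ (j + 1) := by
    unfold dd
    rw [Finset.mul_sum, Finset.mul_sum]
    refine Finset.sum_congr rfl fun ℓ _ => ?_
    rw [hβ ℓ]
    have hcK : (Finset.univ.erase ℓ).card = K := by
      rw [Finset.card_erase_of_mem (Finset.mem_univ ℓ), hcard]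
      omega
    have hsplit : (∏ m, g m) = g ℓ * ∏ m ∈ Finset.univ.erase ℓ, g m :=
      (Finset.mul_prod_erase _ _ (Finset.mem_univ ℓ)).symm
    have hinvprod : ∏ m ∈ Finset.univ.erase ℓ, (g ℓ - g m)⁻¹
        = (-1 : ℝ) ^ K * ∏ m ∈ Finset.univ.erase ℓ, (g m - g ℓ)⁻¹ := by
      have h : ∀ m ∈ Finset.univ.erase ℓ, (g ℓ - g m)⁻¹ = (-1) * (g m - g ℓ)⁻¹ := by
        intro m _; rw [neg_one_mul, ← neg_sub (g m) (g ℓ), inv_neg]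
      rw [Finset.prod_congr rfl h, Finset.prod_mul_distrib, Finset.prod_const, hcK]
    have hdiv : ∏ m ∈ Finset.univ.erase ℓ, g m / (g m - g ℓ)
        = (∏ m ∈ Finset.univ.erase ℓ, g m) * ∏ m ∈ Finset.univ.erase ℓ, (g m - g ℓ)⁻¹ := by
      rw [← Finset.prod_mul_distrib]
      exact Finset.prod_congr rfl fun m _ => div_eq_mul_inv _ _
    rw [hsplit, hinvprod, hdiv]
    ring
  rw [← key]
  exact mul_pos hprod hdd
end

section
/- Let K ≥ 0, let g_0, …, g_K be pairwise distinct positive real numbers, and let β_0, …, β_K be real numbers not all zero. Then the function h : ℝ → ℝ defined by h(x) = ∑_{ℓ=0}^{K} β_ℓ g_ℓ^x has at most K real zeros. -/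
/-!
Dividing by `g a ^ x` turns the term of index `a` into the constant `β a`; differentiating
removes it and leaves an exponential polynomial with one term fewer, with bases `g ℓ / g a` and
coefficients `β ℓ * log (g ℓ / g a)`, still nonzero because the bases `g ℓ` are distinct.
By Rolle's theorem the derivative has at most one zero fewer than the function, so induction on
the number of nonzero terms shows that `n` nonzero terms allow fewer than `n` zeros.
-/

open Real Finset

theorem exists_finset_deriv_eq_zero_and_card_le_succ {f : ℝ → ℝ} (hf : Continuous f)
    {s : Finset ℝ} (hs : ∀ x ∈ s, f x = 0) :
    ∃ t : Finset ℝ, (∀ z ∈ t, deriv f z = 0) ∧ #s ≤ #t + 1 := by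
  have rolle (p : ℝ × ℝ) :
      ∃ z, p.1 < p.2 → f p.1 = f p.2 → z ∈ Set.Ioo p.1 p.2 ∧ deriv f z = 0 := by
    by_cases hp : p.1 < p.2 ∧ f p.1 = f p.2
    · obtain ⟨z, hz, hz0⟩ := exists_deriv_eq_zero hp.1 hf.continuousOn hp.2
      exact ⟨z, fun _ _ => ⟨hz, hz0⟩⟩
    · exact ⟨0, fun h1 h2 => absurd ⟨h1, h2⟩ hp⟩
  choose c hc using rolle
  refine ⟨((s ×ˢ s).filter fun p => p.1 < p.2).image c, ?_, card_le_of_interleaved ?_⟩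
  · simp only [mem_image, mem_filter, mem_product]
    rintro _ ⟨p, ⟨⟨hx, hy⟩, hxy⟩, rfl⟩
    exact (hc p hxy ((hs _ hx).trans (hs _ hy).symm)).2
  · intro x hx y hy hxy _
    exact ⟨c (x, y), mem_image_of_mem _ (by simp [hx, hy, hxy]),
      (hc (x, y) hxy ((hs x hx).trans (hs y hy).symm)).1⟩

variable {ι : Type*}

theorem hasDerivAt_sum_mul_rpow (S : Finset ι) {c : ι → ℝ} (hc : ∀ ℓ ∈ S, 0 < c ℓ) (β : ι → ℝ)
    (x : ℝ) :
    HasDerivAt (fun x => ∑ ℓ ∈ S, β ℓ * c ℓ ^ x) (∑ ℓ ∈ S, β ℓ * log (c ℓ) * c ℓ ^ x) x := by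
  refine HasDerivAt.fun_sum fun ℓ hℓ => ?_
  rw [mul_assoc, mul_comm (log _)]
  exact ((hasStrictDerivAt_const_rpow (hc ℓ hℓ) x).hasDerivAt).const_mul (β ℓ)

theorem sum_mul_div_rpow (S : Finset ι) {g : ι → ℝ} (hg : ∀ ℓ ∈ S, 0 ≤ g ℓ) {a : ℝ} (ha : 0 ≤ a)
    (β : ι → ℝ) (x : ℝ) :
    ∑ ℓ ∈ S, β ℓ * (g ℓ / a) ^ x = (∑ ℓ ∈ S, β ℓ * g ℓ ^ x) / a ^ x := by
  rw [sum_div]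
  refine sum_congr rfl fun ℓ hℓ => ?_
  rw [div_rpow (hg ℓ hℓ) ha, mul_div_assoc]

theorem card_lt_card_of_sum_mul_rpow_eq_zero {S : Finset ι} (hS : S.Nonempty) {g : ι → ℝ}
    (hg_inj : Set.InjOn g S) (hg_pos : ∀ ℓ ∈ S, 0 < g ℓ) {β : ι → ℝ} (hβ : ∀ ℓ ∈ S, β ℓ ≠ 0)
    {s : Finset ℝ} (hs : ∀ x ∈ s, ∑ ℓ ∈ S, β ℓ * g ℓ ^ x = 0) : #s < #S := by
  induction hS using Nonempty.cons_induction generalizing g β s with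
  | singleton a =>
    suffices s = ∅ by simp [this]
    refine eq_empty_of_forall_notMem fun x hx => ?_
    have hx0 := hs x hx
    rw [sum_singleton] at hx0
    exact mul_ne_zero (hβ a (mem_singleton_self a))
      (rpow_pos_of_pos (hg_pos a (mem_singleton_self a)) x).ne' hx0
  | cons a S ha hS ih =>
    have hga : 0 < g a := hg_pos a (mem_cons_self a S)
    set c : ι → ℝ := fun ℓ => g ℓ / g a
    have hc_pos : ∀ ℓ ∈ S.cons a ha, 0 < c ℓ := fun ℓ hℓ => div_pos (hg_pos ℓ hℓ) hga
    have hc_inj : Set.InjOn c S := fun ℓ hℓ ℓ' hℓ' h =>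
      hg_inj (mem_cons_of_mem hℓ) (mem_cons_of_mem hℓ') ((div_left_inj' hga.ne').1 h)
    have hlog_c : ∀ ℓ ∈ S, log (c ℓ) ≠ 0 := fun ℓ hℓ =>
      log_ne_zero_of_pos_of_ne_one (hc_pos ℓ (mem_cons_of_mem hℓ)) fun h => ha <|
        hg_inj (mem_cons_of_mem hℓ) (mem_cons_self a S) ((div_eq_one_iff_eq hga.ne').1 h) ▸ hℓ
    have hf := hasDerivAt_sum_mul_rpow (S.cons a ha) hc_pos β
    obtain ⟨t, ht, hst⟩ := exists_finset_deriv_eq_zero_and_card_le_succ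
      (continuous_iff_continuousAt.2 fun x => (hf x).continuousAt) (s := s) fun x hx => by
        rw [sum_mul_div_rpow _ (fun ℓ hℓ => (hg_pos ℓ hℓ).le) hga.le, hs x hx, zero_div]
    have ht_card : #t < #S := ih hc_inj (fun ℓ hℓ => hc_pos ℓ (mem_cons_of_mem hℓ))
      (fun ℓ hℓ => mul_ne_zero (hβ ℓ (mem_cons_of_mem hℓ)) (hlog_c ℓ hℓ)) fun z hz => by
        have hz0 := ht z hz
        have hca : c a = 1 := div_self hga.ne'
        rwa [(hf z).deriv, sum_cons, hca, log_one, mul_zero, zero_mul, zero_add] at hz0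
    rw [card_cons]
    omega

/-- **An exponential polynomial with `K + 1` terms has at most `K` real zeros.**
Let `K ≥ 0`, let `g 0, …, g K` be pairwise distinct positive reals, and let
`β 0, …, β K` be reals, not all zero.  Then `h x = ∑ ℓ, β ℓ * (g ℓ) ^ x`
(real power) has at most `K` real zeros: any finite set of zeros has
cardinality at most `K`. -/
theorem exponential_polynomial_zeros (K : ℕ) (g : Fin (K + 1) → ℝ)
    (hg_inj : Function.Injective g) (hg_pos : ∀ ℓ, 0 < g ℓ)
    (β : Fin (K + 1) → ℝ) (hβ : ∃ ℓ, β ℓ ≠ 0)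
    (h : ℝ → ℝ) (hh : ∀ x : ℝ, h x = ∑ ℓ, β ℓ * g ℓ ^ x) :
    ∀ s : Finset ℝ, (∀ x ∈ s, h x = 0) → s.card ≤ K := by
  intro s hs
  set S := univ.filter fun ℓ => β ℓ ≠ 0
  have hS : S.Nonempty := by simpa [S, Finset.Nonempty] using hβ
  have hsum (x : ℝ) : ∑ ℓ ∈ S, β ℓ * g ℓ ^ x = h x :=
    hh x ▸ sum_filter_of_ne fun ℓ _ hℓ => left_ne_zero_of_mul hℓ
  have hs_card : #s < #S := card_lt_card_of_sum_mul_rpow_eq_zero hS hg_inj.injOn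
    (fun ℓ _ => hg_pos ℓ) (fun ℓ hℓ => (mem_filter.1 hℓ).2) fun x hx => hsum x ▸ hs x hx
  have hS_card : #S ≤ K + 1 := (card_le_univ S).trans_eq (Fintype.card_fin _)
  omega
end

section
/- Let Q be a d×d complex matrix that is Hermitian and unitary (Q† = Q, Q² = 1), let λ be a real number, and let L be the linear endomorphism of d×d complex matrices given by L(A) = λ(Q A Q − A). Then the exponential of L (as an endomorphism of the space of d×d complex matrices) equals the map A ↦ (1 − p) A + p Q A Q, where p = (1 − e^{−2λ})/2. -/
/-!
Writing `C` for conjugation by `Q`, the generator is `L = λ (C - 1)` and `C` is an involution.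
An involution `u` of a normed algebra gives a continuous ring homomorphism `𝕂 × 𝕂 → 𝔸`,
`(x, y) ↦ x (1 + u) / 2 + y (1 - u) / 2`, sending `(0, -2t)` to `t (u - 1)`. Since `exp` commutes
with continuous ring homomorphisms and is computed componentwise on `𝕂 × 𝕂`, `exp (t (u - 1))` is
the image of `(1, e^{-2t})`, i.e. `(1 - p) + p u` with `p = (1 - e^{-2t}) / 2`.
-/
open Matrix ContinuousLinearMap

attribute [local instance] Matrix.frobeniusNormedAddCommGroup Matrix.frobeniusNormedSpace

-- Instance search does not identify the topology of `Matrix` with the Frobenius-norm topology,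
-- so the operator-norm structure of the endomorphism ring has to be supplied by hand.
instance instIsTopologicalRingMatrixCLM (d : ℕ) :
    IsTopologicalRing (Matrix (Fin d) (Fin d) ℂ →L[ℂ] Matrix (Fin d) (Fin d) ℂ) := by
  let R : NormedRing (Matrix (Fin d) (Fin d) ℂ →L[ℂ] Matrix (Fin d) (Fin d) ℂ) :=
    @ContinuousLinearMap.toNormedRing _ _ _ _ _
  exact @NonUnitalSeminormedRing.toIsTopologicalRing _ R.toNonUnitalNormedRing.toNonUnitalSeminormedRing

section Involution

variable {𝕂 𝔸 : Type*}

/-- Acts as `x` on the `+1`-eigenspace of `u` and as `y` on its `-1`-eigenspace. -/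
def ringHomOfMulSelfEqOne [Field 𝕂] [CharZero 𝕂] [Ring 𝔸] [Algebra 𝕂 𝔸] {u : 𝔸}
    (hu : u * u = 1) : 𝕂 × 𝕂 →+* 𝔸 where
  toFun x := ((x.1 + x.2) / 2) • 1 + ((x.1 - x.2) / 2) • u
  map_one' := by
    simp only [Prod.fst_one, Prod.snd_one]
    match_scalars <;> ring
  map_mul' x y := by
    simp only [Prod.fst_mul, Prod.snd_mul, add_mul, mul_add, smul_mul_smul, one_mul, mul_one, hu]
    match_scalars <;> ring
  map_zero' := by simp
  map_add' x y := by
    simp only [Prod.fst_add, Prod.snd_add]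
    match_scalars <;> ring

theorem ringHomOfMulSelfEqOne_apply [Field 𝕂] [CharZero 𝕂] [Ring 𝔸] [Algebra 𝕂 𝔸] {u : 𝔸}
    (hu : u * u = 1) (x : 𝕂 × 𝕂) :
    ringHomOfMulSelfEqOne hu x = ((x.1 + x.2) / 2) • 1 + ((x.1 - x.2) / 2) • u := rfl

theorem continuous_ringHomOfMulSelfEqOne [Field 𝕂] [CharZero 𝕂] [TopologicalSpace 𝕂]
    [IsTopologicalRing 𝕂] [Ring 𝔸] [Algebra 𝕂 𝔸] [TopologicalSpace 𝔸] [ContinuousAdd 𝔸]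
    [ContinuousSMul 𝕂 𝔸] {u : 𝔸} (hu : u * u = 1) :
    Continuous (ringHomOfMulSelfEqOne (𝕂 := 𝕂) hu) := by
  simp only [ringHomOfMulSelfEqOne, RingHom.coe_mk, MonoidHom.coe_mk, OneHom.coe_mk]
  fun_prop

open NormedSpace in
theorem exp_smul_sub_one_of_mul_self_eq_one [RCLike 𝕂] [NormedRing 𝔸] [NormedAlgebra 𝕂 𝔸]
    {u : 𝔸} (hu : u * u = 1) (t : 𝕂) :
    exp (t • (u - 1)) = ((1 + exp (-2 * t)) / 2) • 1 + ((1 - exp (-2 * t)) / 2) • u := by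
  -- `exp` picks its `ℚ`-algebra structure by choice, but `map_exp` wants an instance.
  let : Algebra ℚ 𝔸 := Algebra.compHom 𝔸 (algebraMap ℚ 𝕂)
  have hgen : ringHomOfMulSelfEqOne hu ((0 : 𝕂), -2 * t) = t • (u - 1) := by
    rw [ringHomOfMulSelfEqOne_apply]
    match_scalars <;> ring
  have hexp : exp ((0 : 𝕂), -2 * t) = (1, exp (-2 * t)) := by
    ext <;> simp
  rw [← hgen, ← map_exp _ (continuous_ringHomOfMulSelfEqOne hu), hexp, ringHomOfMulSelfEqOne_apply]

end Involution

section Conjugation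

variable {n : Type*} [Fintype n] [DecidableEq n]

noncomputable def conjCLM (Q : Matrix n n ℂ) : Matrix n n ℂ →L[ℂ] Matrix n n ℂ :=
  LinearMap.toContinuousLinearMap (LinearMap.mulLeft ℂ Q ∘ₗ LinearMap.mulRight ℂ Q)

@[simp]
theorem conjCLM_apply (Q A : Matrix n n ℂ) : conjCLM Q A = Q * A * Q :=
  (Matrix.mul_assoc Q A Q).symm

theorem conjCLM_mul_self {Q : Matrix n n ℂ} (hQ : Q * Q = 1) : conjCLM Q * conjCLM Q = 1 := by
  ext1 A
  simp only [mul_apply_eq_comp, conjCLM_apply, one_apply_eq_self]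
  calc Q * (Q * A * Q) * Q = (Q * Q) * A * (Q * Q) := by noncomm_ring
    _ = A := by rw [hQ, Matrix.one_mul, Matrix.mul_one]

end Conjugation

theorem exp_pauli_lindblad_generator_general (d : ℕ) (Q : Matrix (Fin d) (Fin d) ℂ)
    (hQ_unit : Q * Q = 1) (lam : ℝ)
    (L : Matrix (Fin d) (Fin d) ℂ →L[ℂ] Matrix (Fin d) (Fin d) ℂ)
    (hL : ∀ A, L A = (lam : ℂ) • (Q * A * Q - A))
    (p : ℝ) (hp : p = (1 - Real.exp (-2 * lam)) / 2) :
    ∀ A, (NormedSpace.exp L) A = (1 - (p : ℂ)) • A + (p : ℂ) • (Q * A * Q) := by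
  have hL_eq : L = (lam : ℂ) • (conjCLM Q - 1) := by
    ext1 A
    simp [hL]
  have hp_eq : (p : ℂ) = (1 - NormedSpace.exp (-2 * (lam : ℂ))) / 2 := by
    rw [hp, ← Complex.exp_eq_exp_ℂ]
    push_cast
    ring
  have hexp : NormedSpace.exp L = ((1 + NormedSpace.exp (-2 * (lam : ℂ))) / 2) • 1
      + ((1 - NormedSpace.exp (-2 * (lam : ℂ))) / 2) • conjCLM Q := by
    let : NormedRing (Matrix (Fin d) (Fin d) ℂ →L[ℂ] Matrix (Fin d) (Fin d) ℂ) :=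
      toNormedRing
    let : NormedAlgebra ℂ (Matrix (Fin d) (Fin d) ℂ →L[ℂ] Matrix (Fin d) (Fin d) ℂ) :=
      toNormedAlgebra
    rw [hL_eq]
    exact exp_smul_sub_one_of_mul_self_eq_one (conjCLM_mul_self hQ_unit) (lam : ℂ)
  intro A
  rw [hexp, hp_eq]
  simp only [_root_.add_apply, _root_.smul_apply, one_apply_eq_self, conjCLM_apply]
  match_scalars <;> ring

/-- **Exponential of a Pauli-Lindblad generator is a Pauli channel.**
Let `Q` be a `d×d` Hermitian unitary complex matrix, `λ` real, and let `L` be the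
(continuous) linear endomorphism of `d×d` complex matrices `L A = λ (Q A Q − A)`.
Then `exp L` is the map `A ↦ (1 − p) A + p Q A Q` with `p = (1 − e^{−2λ})/2`. -/
theorem exp_pauli_lindblad_generator (d : ℕ) (Q : Matrix (Fin d) (Fin d) ℂ)
    (hQ_herm : Qᴴ = Q) (hQ_unit : Q * Q = 1) (lam : ℝ)
    (L : Matrix (Fin d) (Fin d) ℂ →L[ℂ] Matrix (Fin d) (Fin d) ℂ)
    (hL : ∀ A, L A = (lam : ℂ) • (Q * A * Q - A))
    (p : ℝ) (hp : p = (1 - Real.exp (-2 * lam)) / 2) :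
    ∀ A, (NormedSpace.exp L) A = (1 - (p : ℂ)) • A + (p : ℂ) • (Q * A * Q) :=
  exp_pauli_lindblad_generator_general d Q hQ_unit lam L hL p hp
end

section
/- Let Q be a d×d Hermitian unitary complex matrix, let p ∈ [0, 1/2), and let g be a real number. Set δg = (g − 1)/(1 − 2p). Then the composition of the Pauli channel A ↦ (1 − p) A + p Q A Q with the Pauli channel A ↦ (1 − δg·p) A + δg·p Q A Q equals the amplified Pauli channel A ↦ (1 − g p) A + g p Q A Q. -/
open Matrix

/-- **Noise amplification for ZNE.**
Let `Q` be a `d×d` Hermitian unitary complex matrix, `p ∈ [0, 1/2)`, `g` real, and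
`δg = (g − 1)/(1 − 2p)`.  Then composing the Pauli channel with probability `p`
with the Pauli channel with probability `δg · p` yields the amplified Pauli
channel with probability `g · p`. -/
theorem pauli_channel_amplification (d : ℕ) (Q : Matrix (Fin d) (Fin d) ℂ)
    (hQ_herm : Qᴴ = Q) (hQ_unit : Q * Q = 1)
    (p : ℝ) (hp : p ∈ Set.Ico (0 : ℝ) (1 / 2))
    (g δg : ℝ) (hδg : δg = (g - 1) / (1 - 2 * p)) :
    ∀ A : Matrix (Fin d) (Fin d) ℂ,
      (1 - (p : ℂ)) • ((1 - (δg * p : ℝ)) • A + ((δg * p : ℝ) : ℂ) • (Q * A * Q))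
        + (p : ℂ) • (Q * ((1 - (δg * p : ℝ)) • A + ((δg * p : ℝ) : ℂ) • (Q * A * Q)) * Q)
      = (1 - (g * p : ℝ)) • A + ((g * p : ℝ) : ℂ) • (Q * A * Q) := by
  intro A
  have hne : (1 : ℝ) - 2 * p ≠ 0 := by
    have := hp.2
    intro h; nlinarith
  have hδ : δg * (1 - 2 * p) = g - 1 := by
    rw [hδg]; field_simp
  have hδc : (δg : ℂ) * (1 - 2 * p) = g - 1 := by exact_mod_cast hδ
  have hQQ : ∀ M : Matrix (Fin d) (Fin d) ℂ, Q * (Q * M) = M := by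
    intro M; rw [← Matrix.mul_assoc, hQ_unit, Matrix.one_mul]
  have expand : Q * ((1 - (δg * p : ℝ)) • A + ((δg * p : ℝ) : ℂ) • (Q * A * Q)) * Q
      = (1 - (δg * p : ℝ)) • (Q * A * Q) + ((δg * p : ℝ) : ℂ) • A := by
    simp [Matrix.mul_add, Matrix.add_mul, Matrix.mul_smul, Matrix.smul_mul,
      Matrix.mul_assoc, hQ_unit, hQQ]
  rw [expand]
  match_scalars
  · simp only [Algebra.cast, Complex.coe_algebraMap]
    push_cast
    linear_combination (-(p : ℂ)) * hδc
  · simp only [Algebra.cast, Complex.coe_algebraMap]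
    push_cast
    linear_combination (p : ℂ) * hδc
end

section
/- Let Q_1, …, Q_N be d×d Hermitian unitary complex matrices, p_1, …, p_N real numbers, g a real number, ρ and O arbitrary d×d complex matrices. For each i let N_i^{(g)}(A) = (1 − g p_i) A + g p_i Q_i A Q_i, and for S ⊆ {1, …, N} let 𝒬_S denote the composition of the conjugation maps A ↦ Q_i A Q_i over i ∈ S (in increasing order of i). Then Tr(ρ · (N_N^{(g)} ∘ ⋯ ∘ N_1^{(g)})(O)) = ∑_{T ⊆ {1,…,N}} g^{|T|} (∏_{i∈T} p_i) G_T, where G_T = ∑_{S ⊆ T} (−1)^{|T| − |S|} Tr(ρ · 𝒬_S(O)). -/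
/-!
Writing each amplified channel as `1 + g pᵢ (𝒬ᵢ - 1)` in the algebra of linear maps on matrices,
the ordered composition expands multilinearly into `∑_T (∏_{i ∈ T} g pᵢ) Δ_T`, where `Δ_T` is the
ordered composition of the finite differences `𝒬ᵢ - 1` over `i ∈ T`. Expanding `Δ_T` once more
gives `∑_{S ⊆ T} (-1)^{|T \ S|} 𝒬_S`, and taking `Tr(ρ · (-)(O))` yields the coefficients `G_T`.
The expansions take place in a noncommutative ring, so the products stay ordered along the list;
only the scalars are pulled out.
-/

open Matrix

namespace List

variable {ι : Type*} [DecidableEq ι]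

theorem prod_map_add_eq_sum_powerset {R : Type*} [Semiring R] (a b : ι → R) {l : List ι}
    (hl : l.Nodup) :
    (l.map fun i => a i + b i).prod
      = ∑ S ∈ l.toFinset.powerset, (l.map fun i => if i ∈ S then b i else a i).prod := by
  induction l with
  | nil => simp
  | cons j t ih =>
    obtain ⟨hjt, ht⟩ := nodup_cons.mp hl
    have hj : j ∉ t.toFinset := by simpa using hjt
    have tail_congr (S : Finset ι) :
        (t.map fun i => if i ∈ insert j S then b i else a i)
          = t.map fun i => if i ∈ S then b i else a i :=
      map_congr_left fun i hi => by simp [ne_of_mem_of_not_mem hi hjt]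
    have head (S : Finset ι) (hS : S ∈ t.toFinset.powerset) :
        (if j ∈ S then b j else a j) = a j :=
      if_neg fun h => hj (Finset.mem_powerset.mp hS h)
    simp only [map_cons, prod_cons, toFinset_cons, Finset.sum_powerset_insert hj, ih ht,
      add_mul, Finset.mul_sum, Finset.sum_add_distrib, tail_congr, Finset.mem_insert_self, if_true]
    exact congrArg (· + _) (Finset.sum_congr rfl fun S hS => by rw [head S hS])

omit [DecidableEq ι] in
theorem prod_map_smul {R A : Type*} [CommMonoid R] [Monoid A] [MulAction R A]
    [IsScalarTower R A A] [SMulCommClass R A A] (r : ι → R) (x : ι → A) (l : List ι) :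
    (l.map fun i => r i • x i).prod = (l.map r).prod • (l.map x).prod := by
  induction l with
  | nil => simp
  | cons j t ih => simp only [map_cons, prod_cons, ih, smul_mul_smul_comm]

theorem prod_map_ite_eq_prod {M : Type*} [CommMonoid M] (r : ι → M) {l : List ι} (hl : l.Nodup)
    {T : Finset ι} (hT : T ⊆ l.toFinset) :
    (l.map fun i => if i ∈ T then r i else 1).prod = ∏ i ∈ T, r i := by
  rw [← prod_toFinset _ hl, Finset.prod_ite_mem, Finset.inter_eq_right.mpr hT]

theorem prod_map_ite_smul {R A : Type*} [CommMonoid R] [Monoid A] [MulAction R A]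
    [IsScalarTower R A A] [SMulCommClass R A A] (r : ι → R) (x y : ι → A) {l : List ι}
    (hl : l.Nodup) {T : Finset ι} (hT : T ⊆ l.toFinset) :
    (l.map fun i => if i ∈ T then r i • x i else y i).prod
      = (∏ i ∈ T, r i) • (l.map fun i => if i ∈ T then x i else y i).prod := by
  have factor (i : ι) : (if i ∈ T then r i • x i else y i)
      = (if i ∈ T then r i else 1) • (if i ∈ T then x i else y i) := by
    split_ifs <;> simp
  simp only [factor, prod_map_smul, prod_map_ite_eq_prod r hl hT]

theorem prod_map_ite_sub_one {R A : Type*} [CommRing R] [Ring A] [Algebra R A] (x : ι → A)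
    {l : List ι} (hl : l.Nodup) {T : Finset ι} (hT : T ⊆ l.toFinset) :
    (l.map fun i => if i ∈ T then x i - 1 else 1).prod
      = ∑ S ∈ T.powerset, (-1 : R) ^ (T.card - S.card) •
          (l.map fun i => if i ∈ S then x i else 1).prod := by
  have split (i : ι) : (if i ∈ T then x i - 1 else 1)
      = (if i ∈ T then -1 else 1) + (if i ∈ T then x i else 0) := by
    split_ifs <;> simp [sub_eq_neg_add]
  have vanish (S : Finset ι) (hS : S ∈ l.toFinset.powerset) (hST : S ∉ T.powerset) :
      (l.map fun i => if i ∈ S then (if i ∈ T then x i else 0) else (if i ∈ T then -1 else 1)).prod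
        = 0 := by
    obtain ⟨i, hiS, hiT⟩ := Finset.not_subset.mp (mt Finset.mem_powerset.mpr hST)
    exact prod_eq_zero <| mem_map.mpr
      ⟨i, mem_toFinset.mp (Finset.mem_powerset.mp hS hiS), by simp [hiS, hiT]⟩
  simp only [split, prod_map_add_eq_sum_powerset _ _ hl]
  rw [← Finset.sum_subset (Finset.powerset_mono.mpr hT) vanish]
  refine Finset.sum_congr rfl fun S hS => ?_
  have hST := Finset.mem_powerset.mp hS
  set y : ι → A := fun i => if i ∈ S then x i else 1
  calc (l.map fun i => if i ∈ S then (if i ∈ T then x i else 0) else (if i ∈ T then -1 else 1)).prod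
      = (l.map fun i => if i ∈ T \ S then (-1 : R) • y i else y i).prod := by
        refine congrArg prod (map_congr_left fun i _ => ?_)
        by_cases hiS : i ∈ S
        · simp [y, hiS, hST hiS]
        · by_cases hiT : i ∈ T <;> simp [y, hiS, hiT]
    _ = (-1 : R) ^ (T.card - S.card) • (l.map y).prod := by
        rw [prod_map_ite_smul _ _ _ hl (Finset.sdiff_subset.trans hT), Finset.prod_const,
          Finset.card_sdiff_of_subset hST]
        simp only [ite_self]

theorem prod_map_one_add_smul_sub_one {R A : Type*} [CommRing R] [Ring A] [Algebra R A]
    (c : ι → R) (x : ι → A) {l : List ι} (hl : l.Nodup) :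
    (l.map fun i => 1 + c i • (x i - 1)).prod
      = ∑ T ∈ l.toFinset.powerset, (∏ i ∈ T, c i) •
          ∑ S ∈ T.powerset, (-1 : R) ^ (T.card - S.card) •
            (l.map fun i => if i ∈ S then x i else 1).prod := by
  rw [prod_map_add_eq_sum_powerset _ _ hl]
  refine Finset.sum_congr rfl fun T hT => ?_
  rw [prod_map_ite_smul _ _ _ hl (Finset.mem_powerset.mp hT),
    prod_map_ite_sub_one (R := R) _ hl (Finset.mem_powerset.mp hT)]

omit [DecidableEq ι] in
theorem foldl_apply_eq_prod_reverse {R M : Type*} [Semiring R] [AddCommMonoid M] [Module R M]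
    (f : ι → Module.End R M) (l : List ι) (O : M) :
    l.foldl (fun A i => f i A) O = (l.reverse.map f).prod O := by
  induction l generalizing O with
  | nil => rfl
  | cons j t ih => simp [ih, Module.End.mul_apply]

end List

theorem noisy_expectation_polynomial_expansion_general (d N : ℕ)
    (Q : Fin N → Matrix (Fin d) (Fin d) ℂ)
    (p : Fin N → ℝ) (g : ℝ)
    (ρ O : Matrix (Fin d) (Fin d) ℂ) :
    (ρ * (List.finRange N).foldl
        (fun A i => (1 - (g * p i : ℝ)) • A + ((g * p i : ℝ) : ℂ) • (Q i * A * Q i)) O).trace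
      = ∑ T ∈ (Finset.univ : Finset (Fin N)).powerset,
          (g : ℂ) ^ T.card * (∏ i ∈ T, (p i : ℂ)) *
          ∑ S ∈ T.powerset, (-1 : ℂ) ^ (T.card - S.card) *
            (ρ * (List.finRange N).foldl
                (fun A i => if i ∈ S then Q i * A * Q i else A) O).trace := by
  let K (i : Fin N) : Module.End ℂ (Matrix (Fin d) (Fin d) ℂ) :=
    LinearMap.mulLeftRight ℂ (Q i, Q i)
  have channel : (fun A i => (1 - (g * p i : ℝ)) • A + ((g * p i : ℝ) : ℂ) • (Q i * A * Q i))
      = fun A i => (1 + ((g : ℂ) * p i) • (K i - 1)) A := by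
    funext A i
    simp only [RCLike.real_smul_eq_coe_smul (K := ℂ), Complex.coe_algebraMap, Complex.ofReal_sub,
      Complex.ofReal_one, Complex.ofReal_mul, sub_smul, one_smul, smul_sub, LinearMap.add_apply,
      Module.End.one_apply, LinearMap.sub_apply, LinearMap.smul_apply,
      LinearMap.mulLeftRight_apply, K]
    abel
  have conjugation (S : Finset (Fin N)) : (fun A i => if i ∈ S then Q i * A * Q i else A)
      = fun A i => (if i ∈ S then K i else 1) A := by
    funext A i
    split_ifs <;> rfl
  have hL : (List.finRange N).reverse.Nodup := List.nodup_reverse.mpr (List.nodup_finRange N)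
  simp only [channel, conjugation, List.foldl_apply_eq_prod_reverse,
    List.prod_map_one_add_smul_sub_one _ _ hL, List.toFinset_reverse, List.toFinset_finRange,
    LinearMap.sum_apply, LinearMap.smul_apply, Matrix.mul_smul, trace_sum, trace_smul,
    smul_eq_mul, Finset.mul_sum, Finset.prod_mul_distrib, Finset.prod_const]

/-- **Polynomial expansion of the noisy expectation value in the gain `g`.**
Let `Q 1, …, Q N` be Hermitian unitary `d×d` complex matrices, `p i` and `g` real,
`ρ, O` arbitrary `d×d` complex matrices.  With the amplified Pauli channels
`N_i^{(g)} A = (1 − g p i) A + g p i Q i A Q i` and, for `S ⊆ {1, …, N}`, the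
composition `𝒬_S` of the conjugations `A ↦ Q i A Q i` over `i ∈ S` (in increasing
`i`), one has
`Tr(ρ (N_N^{(g)} ∘ ⋯ ∘ N_1^{(g)})(O)) = ∑_{T} g^{|T|} (∏_{i∈T} p i) G_T` where
`G_T = ∑_{S ⊆ T} (−1)^{|T|−|S|} Tr(ρ 𝒬_S(O))`. -/
theorem noisy_expectation_polynomial_expansion (d N : ℕ)
    (Q : Fin N → Matrix (Fin d) (Fin d) ℂ)
    (hQ_herm : ∀ i, (Q i)ᴴ = Q i) (hQ_unit : ∀ i, Q i * Q i = 1)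
    (p : Fin N → ℝ) (g : ℝ)
    (ρ O : Matrix (Fin d) (Fin d) ℂ) :
    (ρ * (List.finRange N).foldl
        (fun A i => (1 - (g * p i : ℝ)) • A + ((g * p i : ℝ) : ℂ) • (Q i * A * Q i)) O).trace
      = ∑ T ∈ (Finset.univ : Finset (Fin N)).powerset,
          (g : ℂ) ^ T.card * (∏ i ∈ T, (p i : ℂ)) *
          ∑ S ∈ T.powerset, (-1 : ℂ) ^ (T.card - S.card) *
            (ρ * (List.finRange N).foldl
                (fun A i => if i ∈ S then Q i * A * Q i else A) O).trace :=
  noisy_expectation_polynomial_expansion_general d N Q p g ρ O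
end

section
/- Let Q_1, …, Q_N be d×d Hermitian unitary complex matrices, p_1, …, p_N ∈ [0, 1], ρ a density matrix, and O a d×d complex matrix with ‖O‖ ≤ 1. For g ∈ ℝ define f(g) = Tr(ρ · (N_N^{(g)} ∘ ⋯ ∘ N_1^{(g)})(O)) with N_i^{(g)}(A) = (1 − g p_i) A + g p_i Q_i A Q_i. Let K ≥ 0 with K + 1 ≤ N, let g_0, …, g_K be pairwise distinct positive reals, and let β_ℓ = ∏_{m ≠ ℓ} g_m / (g_m − g_ℓ). Then |∑_{ℓ=0}^{K} β_ℓ f(g_ℓ) − Tr(ρ O)| ≤ ∑_{k=K+1}^{N} 2^k · |∑_{ℓ=0}^{K} β_ℓ g_ℓ^k| · e_k(p_1, …, p_N), where e_k denotes the elementary symmetric polynomial of degree k. -/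
open Matrix
open scoped Matrix.Norms.L2Operator ComplexOrder

/-!
Each amplified channel is affine in the gain, so `f` is a polynomial of degree at most `N`.
Peeling off one channel at a time, its coefficient `c_k` of `g ^ k` is a sum over `k`-subsets
`S` of `∏ i ∈ S, p i` times an alternating sum of `2 ^ k` conjugates of `O`, each of norm at most
`1`; since `A ↦ Tr (ρ A)` is a contraction for a density matrix `ρ`, `‖c_k‖ ≤ 2 ^ k e_k(p)`.
The Richardson weights are the values at `0` of the Lagrange basis on the nodes, so
`∑ ℓ, β ℓ * g ℓ ^ k = 0 ^ k` for `k ≤ K`, and the extrapolation error is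
`∑ k ∈ Icc (K + 1) N, c_k * ∑ ℓ, β ℓ * g ℓ ^ k`.
-/

open Polynomial Finset

namespace Multiset

variable {R : Type*} [CommSemiring R]

theorem esymm_zero (s : Multiset R) : s.esymm 0 = 1 := by
  simp [esymm]

theorem esymm_cons_succ (a : R) (s : Multiset R) (k : ℕ) :
    (a ::ₘ s).esymm (k + 1) = s.esymm (k + 1) + a * s.esymm k := by
  simp [esymm, powersetCard_cons, sum_map_mul_left]

theorem esymm_eq_zero_of_card_lt {s : Multiset R} {k : ℕ} (h : card s < k) : s.esymm k = 0 := by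
  simp [esymm, powersetCard_eq_empty k h]

end Multiset

theorem norm_coeff_add_C_mul_X_mul_sub_le (P₁ P₂ : ℂ[X]) {c : ℝ} (hc : 0 ≤ c) (s : Multiset ℝ)
    (a : ℝ) (h₁ : ∀ k, ‖P₁.coeff k‖ ≤ 2 ^ k * s.esymm k * a)
    (h₂ : ∀ k, ‖P₂.coeff k‖ ≤ 2 ^ k * s.esymm k * a) (k : ℕ) :
    ‖(P₁ + C (c : ℂ) * X * (P₂ - P₁)).coeff k‖ ≤ 2 ^ k * (c ::ₘ s).esymm k * a := by
  cases k with
  | zero => simpa [Multiset.esymm_zero] using h₁ 0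
  | succ k =>
    rw [coeff_add, mul_assoc, coeff_C_mul, coeff_X_mul, coeff_sub, Multiset.esymm_cons_succ]
    calc _ ≤ ‖P₁.coeff (k + 1)‖ + c * (‖P₂.coeff k‖ + ‖P₁.coeff k‖) := by
          grw [norm_add_le, norm_mul, Complex.norm_of_nonneg hc, norm_sub_le]
      _ ≤ _ := by
          grw [h₁, h₁, h₂]
          exact le_of_eq (by ring)

theorem natDegree_le_card_of_norm_coeff_le {P : ℂ[X]} {s : Multiset ℝ} {a : ℝ}
    (h : ∀ k, ‖P.coeff k‖ ≤ 2 ^ k * s.esymm k * a) : P.natDegree ≤ Multiset.card s :=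
  natDegree_le_iff_coeff_eq_zero.2 fun k hk => by
    simpa [Multiset.esymm_eq_zero_of_card_lt hk] using h k

section AmplifiedChannel

variable {ι E : Type*} [SeminormedAddCommGroup E] [Module ℂ E]

/-- The channel `N_i^{(x)}` of the paper, with the conjugation `A ↦ Q i * A * Q i` replaced by
an arbitrary linear map `T i`. -/
def amplifiedChannel (T : ι → E →ₗ[ℂ] E) (q : ι → ℝ) (x : ℂ) (A : E) (i : ι) : E :=
  (1 - x * q i) • A + (x * q i) • T i A

theorem exists_polynomial_foldl_amplifiedChannel (T : ι → E →ₗ[ℂ] E)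
    (hT : ∀ i B, ‖T i B‖ ≤ ‖B‖) (q : ι → ℝ) (hq : ∀ i, 0 ≤ q i) (A : E) (L : List ι)
    (φ : E →ₗ[ℂ] ℂ) (hφ : ∀ B, ‖φ B‖ ≤ ‖B‖) :
    ∃ P : ℂ[X], (∀ x, φ (L.foldl (amplifiedChannel T q x) A) = P.eval x) ∧
      ∀ k, ‖P.coeff k‖ ≤ 2 ^ k * (L.map q : Multiset ℝ).esymm k * ‖A‖ := by
  -- Peeling off the last channel and replacing `φ` by `φ ∘ₗ T i` avoids proving the fold linear.
  induction L using List.reverseRecOn generalizing φ with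
  | nil =>
    refine ⟨C (φ A), fun x => by simp, fun k => ?_⟩
    cases k with
    | zero => simpa [Multiset.esymm_zero] using hφ A
    | succ k => simp [Multiset.esymm, Multiset.powersetCard_zero_right]
  | append_singleton L i ih =>
    obtain ⟨P₁, hP₁, hc₁⟩ := ih φ hφ
    obtain ⟨P₂, hP₂, hc₂⟩ := ih (φ ∘ₗ T i) fun B => (hφ _).trans (hT i B)
    refine ⟨P₁ + C (q i : ℂ) * X * (P₂ - P₁), fun x => ?_, fun k => ?_⟩
    · simp only [List.foldl_append, List.foldl_cons, List.foldl_nil, amplifiedChannel, map_add,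
        map_smul, smul_eq_mul, eval_add, eval_mul, eval_sub, eval_C, eval_X, hP₁, ← hP₂,
        LinearMap.comp_apply]
      ring
    · have hmap : ((L ++ [i]).map q : Multiset ℝ) = q i ::ₘ (L.map q : Multiset ℝ) := by simp
      rw [hmap]
      exact norm_coeff_add_C_mul_X_mul_sub_le P₁ P₂ (hq i) _ _ hc₁ hc₂ k

end AmplifiedChannel

theorem Lagrange.eval_zero_basis {F ι : Type*} [Field F] [DecidableEq ι] (s : Finset ι)
    (v : ι → F) (i : ι) :
    (Lagrange.basis s v i).eval 0 = ∏ j ∈ s.erase i, v j / (v j - v i) := by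
  rw [Lagrange.basis, eval_prod]
  refine prod_congr rfl fun j _ => ?_
  rw [Lagrange.basisDivisor, eval_mul, eval_C, eval_sub, eval_X, eval_C, div_eq_mul_inv,
    ← neg_sub (v i), inv_neg]
  ring

section Richardson

variable {ι : Type*} [Fintype ι] [DecidableEq ι]

def richardsonWeight {F : Type*} [Field F] (v : ι → F) (i : ι) : F :=
  ∏ j ∈ univ.erase i, v j / (v j - v i)

theorem sum_richardsonWeight_mul_pow {F : Type*} [Field F] {v : ι → F}
    (hv : Function.Injective v) {k : ℕ} (hk : k < Fintype.card ι) :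
    ∑ i, richardsonWeight v i * v i ^ k = 0 ^ k := by
  have hdeg : (X ^ k : F[X]).degree < #(univ : Finset ι) := by
    rw [degree_X_pow, card_univ]
    exact_mod_cast hk
  have := congrArg (eval 0) (Lagrange.eq_interpolate hv.injOn hdeg)
  simp only [eval_pow, eval_X, Lagrange.interpolate_apply, eval_finsetSum, eval_mul, eval_C,
    Lagrange.eval_zero_basis] at this
  rw [this]
  exact sum_congr rfl fun i _ => mul_comm _ _

end Richardson

theorem sum_mul_eval_sub_eval_zero {R ι : Type*} [CommRing R] [Fintype ι] (P : R[X]) {N : ℕ}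
    (hP : P.natDegree ≤ N) (K : ℕ) (w v : ι → R) (hwv : ∀ k ≤ K, ∑ i, w i * v i ^ k = 0 ^ k) :
    ∑ i, w i * P.eval (v i) - P.eval 0 = ∑ k ∈ Icc (K + 1) N, P.coeff k * ∑ i, w i * v i ^ k := by
  calc ∑ i, w i * P.eval (v i) - P.eval 0
      = ∑ k ∈ range (N + 1), P.coeff k * (∑ i, w i * v i ^ k - 0 ^ k) := by
        simp only [eval_eq_sum_range' (Nat.lt_succ_of_le hP), mul_sub, sum_sub_distrib, mul_sum]
        rw [sum_comm]
        congr 1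
        exact sum_congr rfl fun i _ => sum_congr rfl fun k _ => by ring
    _ = ∑ k ∈ Icc (K + 1) N, P.coeff k * (∑ i, w i * v i ^ k - 0 ^ k) := by
        refine (sum_subset (fun k hk => ?_) fun k hk hkK => ?_).symm
        · simp only [mem_Icc, mem_range] at hk ⊢; omega
        · simp only [mem_Icc, mem_range, not_and, not_le] at hk hkK
          rw [hwv k (by omega), sub_self, mul_zero]
    _ = _ := sum_congr rfl fun k hk => by
        rw [zero_pow (by simp only [mem_Icc] at hk; omega), sub_zero]

theorem norm_sum_mul_eval_sub_eval_zero_le {ι : Type*} [Fintype ι] (P : ℂ[X]) {N : ℕ}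
    (hP : P.natDegree ≤ N) (K : ℕ) (w v : ι → ℝ) (hwv : ∀ k ≤ K, ∑ i, w i * v i ^ k = 0 ^ k)
    (b : ℕ → ℝ) (hb : ∀ k, ‖P.coeff k‖ ≤ b k) :
    ‖∑ i, (w i : ℂ) * P.eval (v i : ℂ) - P.eval 0‖
      ≤ ∑ k ∈ Icc (K + 1) N, b k * |∑ i, w i * v i ^ k| := by
  rw [sum_mul_eval_sub_eval_zero P hP K _ _ fun k hk => by exact_mod_cast hwv k hk]
  refine (norm_sum_le _ _).trans (sum_le_sum fun k _ => ?_)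
  have hσ : ‖∑ i, (w i : ℂ) * (v i : ℂ) ^ k‖ = |∑ i, w i * v i ^ k| := by
    rw [← Real.norm_eq_abs, ← Complex.norm_real]
    push_cast
    rfl
  rw [norm_mul, hσ]
  exact mul_le_mul_of_nonneg_right (hb k) (abs_nonneg _)

namespace Matrix

variable {𝕜 n : Type*} [RCLike 𝕜] [Fintype n] [DecidableEq n]

theorem norm_inner_mulVec_le (A : Matrix n n 𝕜) (x : EuclideanSpace 𝕜 n) :
    ‖inner 𝕜 x ((EuclideanSpace.equiv n 𝕜).symm (A *ᵥ x))‖ ≤ ‖A‖ * ‖x‖ ^ 2 :=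
  calc _ ≤ ‖x‖ * (‖A‖ * ‖x‖) := (norm_inner_le_norm _ _).trans
          (mul_le_mul_of_nonneg_left (A.l2_opNorm_mulVec x) (norm_nonneg _))
    _ = ‖A‖ * ‖x‖ ^ 2 := by ring

open scoped MatrixOrder in
theorem PosSemidef.norm_trace_mul_le {ρ : Matrix n n 𝕜} (hρ : ρ.PosSemidef) (A : Matrix n n 𝕜) :
    ‖(ρ * A).trace‖ ≤ RCLike.re ρ.trace * ‖A‖ := by
  obtain ⟨B, rfl⟩ := CStarAlgebra.nonneg_iff_eq_star_mul_self.mp hρ.nonneg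
  let x : n → EuclideanSpace 𝕜 n := fun j => WithLp.toLp 2 (star (B j))
  have htrace (M : Matrix n n 𝕜) : (star B * B * M).trace
      = ∑ j, inner 𝕜 (x j) ((EuclideanSpace.equiv n 𝕜).symm (M *ᵥ x j)) := by
    rw [Matrix.mul_assoc, trace_mul_comm, Matrix.mul_assoc, trace]
    refine sum_congr rfl fun j _ => ?_
    rw [diag_apply, ← Matrix.mul_assoc, mul_mul_apply, EuclideanSpace.inner_eq_star_dotProduct,
      dotProduct_comm]
    simp only [star_eq_conjTranspose, PiLp.continuousLinearEquiv_symm_apply, star_star, x]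
    rfl
  have hnorm (j : n) : ‖x j‖ ^ 2
      = RCLike.re (inner 𝕜 (x j) ((EuclideanSpace.equiv n 𝕜).symm (1 *ᵥ x j))) := by
    rw [one_mulVec]
    exact norm_sq_eq_re_inner (x j)
  calc ‖(star B * B * A).trace‖ ≤ ∑ j, ‖A‖ * ‖x j‖ ^ 2 := by
        rw [htrace]
        exact (norm_sum_le _ _).trans (sum_le_sum fun j _ => norm_inner_mulVec_le A (x j))
    _ = RCLike.re (star B * B).trace * ‖A‖ := by
        rw [← Matrix.mul_one (star B * B), htrace, map_sum, ← mul_sum, mul_comm]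
        simp_rw [hnorm]

theorem norm_mul_mul_self_eq {Q : Matrix n n 𝕜} (hQ : Q.IsHermitian) (hQQ : Q * Q = 1)
    (A : Matrix n n 𝕜) : ‖Q * A * Q‖ = ‖A‖ := by
  have hQu : Q ∈ unitary (Matrix n n 𝕜) := by
    rw [Unitary.mem_iff, star_eq_conjTranspose, hQ]
    exact ⟨hQQ, hQQ⟩
  rw [CStarRing.norm_mul_mem_unitary _ hQu, CStarRing.norm_mem_unitary_mul _ hQu]

end Matrix

theorem zne_richardson_error_bound_general (d N K : ℕ)
    (Q : Fin N → Matrix (Fin d) (Fin d) ℂ)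
    (hQ_herm : ∀ i, (Q i)ᴴ = Q i) (hQ_unit : ∀ i, Q i * Q i = 1)
    (p : Fin N → ℝ) (hp : ∀ i, p i ∈ Set.Icc (0 : ℝ) 1)
    (ρ O : Matrix (Fin d) (Fin d) ℂ)
    (hρ : ρ.PosSemidef) (hρ_tr : ρ.trace = 1) (hO : ‖O‖ ≤ 1)
    (g : Fin (K + 1) → ℝ) (hg_inj : Function.Injective g)
    (β : Fin (K + 1) → ℝ)
    (hβ : ∀ ℓ, β ℓ = ∏ m ∈ Finset.univ.erase ℓ, g m / (g m - g ℓ))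
    (f : ℝ → ℂ)
    (hf : ∀ x : ℝ, f x = (ρ * (List.finRange N).foldl
        (fun A i => (1 - (x * p i : ℝ)) • A + ((x * p i : ℝ) : ℂ) • (Q i * A * Q i)) O).trace) :
    ‖(∑ ℓ, (β ℓ : ℂ) * f (g ℓ)) - (ρ * O).trace‖
      ≤ ∑ k ∈ Finset.Icc (K + 1) N,
          2 ^ k * |∑ ℓ, β ℓ * g ℓ ^ k| *
            ∑ S ∈ Finset.univ.powersetCard k, ∏ i ∈ S, p i := by
  let T i := LinearMap.mulLeftRight ℂ (Q i, Q i)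
  let φ := traceLinearMap (Fin d) ℂ ℂ ∘ₗ LinearMap.mulLeft ℂ ρ
  obtain ⟨P, hP, hPcoeff⟩ := exists_polynomial_foldl_amplifiedChannel T
    (fun i B => (norm_mul_mul_self_eq (hQ_herm i) (hQ_unit i) B).le) p (fun i => (hp i).1) O
    (List.finRange N) φ (fun B => by simpa [φ, hρ_tr] using hρ.norm_trace_mul_le B)
  have hfP (x : ℝ) : f x = P.eval (x : ℂ) := by
    rw [hf, ← hP]
    congr 3
    funext A i
    simp [amplifiedChannel, T, LinearMap.mulLeftRight_apply, ← Complex.coe_smul]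
  have hP0 : P.eval 0 = (ρ * O).trace := by
    rw [← hP, List.foldl_fixed' fun i => by simp [amplifiedChannel]]
    rfl
  have hdeg : P.natDegree ≤ N := (natDegree_le_card_of_norm_coeff_le hPcoeff).trans (by simp)
  have hweights (k : ℕ) (hk : k ≤ K) : ∑ ℓ, β ℓ * g ℓ ^ k = 0 ^ k := by
    simpa only [richardsonWeight, ← hβ] using
      sum_richardsonWeight_mul_pow hg_inj (by simpa using Nat.lt_succ_of_le hk)
  have hcoeff (k : ℕ) : ‖P.coeff k‖ ≤ 2 ^ k * ∑ S ∈ univ.powersetCard k, ∏ i ∈ S, p i := by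
    have he : 0 ≤ ∑ S ∈ univ.powersetCard k, ∏ i ∈ S, p i :=
      sum_nonneg fun S _ => prod_nonneg fun i _ => (hp i).1
    have h := hPcoeff k
    rw [← List.ofFn_eq_map, ← Fin.univ_val_map, Finset.esymm_map_val] at h
    exact h.trans (mul_le_of_le_one_right (mul_nonneg (by positivity) he) hO)
  simp only [hfP, ← hP0]
  exact (norm_sum_mul_eval_sub_eval_zero_le P hdeg K β g hweights _ hcoeff).trans_eq
    (sum_congr rfl fun k _ => by ring)

/-- **Zero-noise extrapolation error bound.**
Let `Q 1, …, Q N` be Hermitian unitary `d×d` complex matrices, `p i ∈ [0,1]`, `ρ` a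
density matrix, `O` with `‖O‖ ≤ 1`.  For `g ∈ ℝ` let
`f g = Tr(ρ (N_N^{(g)} ∘ ⋯ ∘ N_1^{(g)})(O))` with
`N_i^{(g)} A = (1 − g p i) A + g p i Q i A Q i`.  For `K + 1 ≤ N`, pairwise distinct
positive nodes `g 0, …, g K` and Richardson weights
`β ℓ = ∏_{m ≠ ℓ} g m / (g m − g ℓ)`, one has
`|∑ ℓ, β ℓ f (g ℓ) − Tr(ρ O)| ≤ ∑_{k=K+1}^{N} 2^k |∑ ℓ, β ℓ (g ℓ)^k| e_k(p)`,
with `e_k` the elementary symmetric polynomial of degree `k`. -/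
theorem zne_richardson_error_bound (d N K : ℕ) (hKN : K + 1 ≤ N)
    (Q : Fin N → Matrix (Fin d) (Fin d) ℂ)
    (hQ_herm : ∀ i, (Q i)ᴴ = Q i) (hQ_unit : ∀ i, Q i * Q i = 1)
    (p : Fin N → ℝ) (hp : ∀ i, p i ∈ Set.Icc (0 : ℝ) 1)
    (ρ O : Matrix (Fin d) (Fin d) ℂ)
    (hρ : ρ.PosSemidef) (hρ_tr : ρ.trace = 1) (hO : ‖O‖ ≤ 1)
    (g : Fin (K + 1) → ℝ) (hg_inj : Function.Injective g) (hg_pos : ∀ ℓ, 0 < g ℓ)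
    (β : Fin (K + 1) → ℝ)
    (hβ : ∀ ℓ, β ℓ = ∏ m ∈ Finset.univ.erase ℓ, g m / (g m - g ℓ))
    (f : ℝ → ℂ)
    (hf : ∀ x : ℝ, f x = (ρ * (List.finRange N).foldl
        (fun A i => (1 - (x * p i : ℝ)) • A + ((x * p i : ℝ) : ℂ) • (Q i * A * Q i)) O).trace) :
    ‖(∑ ℓ, (β ℓ : ℂ) * f (g ℓ)) - (ρ * O).trace‖
      ≤ ∑ k ∈ Finset.Icc (K + 1) N,
          2 ^ k * |∑ ℓ, β ℓ * g ℓ ^ k| *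
            ∑ S ∈ Finset.univ.powersetCard k, ∏ i ∈ S, p i :=
  zne_richardson_error_bound_general d N K Q hQ_herm hQ_unit p hp ρ O hρ hρ_tr hO g hg_inj β hβ f hf
end

section
/- Let Q_1, …, Q_N be d×d Hermitian unitary complex matrices such that every pair Q_i, Q_j either commutes or anticommutes, let p_1, …, p_N ∈ [0, 1/2), γ_i = 1/(1 − 2p_i), and let ρ and O be arbitrary d×d complex matrices. For σ ∈ {−1, +1}^N let w(σ) = ∏_{i=1}^{N} w_i(σ_i) with w_i(+1) = 1 − p_i and w_i(−1) = p_i, let C_σ be the composition of the conjugation maps A ↦ Q_i A Q_i over all i with σ_i = −1 (in increasing order of i), and let 𝒩 = N_{Q_N,p_N} ∘ ⋯ ∘ N_{Q_1,p_1} where N_{Q_i,p_i}(A) = (1 − p_i) A + p_i Q_i A Q_i. Then ∑_{σ ∈ {−1,+1}^N} w(σ) · (∏_{i=1}^{N} γ_i σ_i) · Tr(ρ · C_σ(𝒩(O))) = Tr(ρ O). That is, the probabilistic error cancellation estimator is an unbiased estimator of the ideal (noiseless) expectation value. -/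
/-!
The conjugations `C i : A ↦ Q i * A * Q i` are commuting involutions of the matrices, viewed as a
real vector space (the sign in `Q i * Q j = ± Q j * Q i` occurs twice and cancels). So the
correction for the first channel can be moved past the later noise channels, and the sum over `σ`
splits off one channel at a time; for a single channel the signed sum is
`γ ((1 - p) - p C) ((1 - p) + p C) = γ ((1 - p) ^ 2 - p ^ 2 C ^ 2) = γ (1 - 2 p) = 1`.
-/

open Matrix Finset

theorem Fin.sum_piFinset_const_succ {n : ℕ} {α β : Type*} [AddCommMonoid β] (S : Finset α)
    (f : (Fin (n + 1) → α) → β) :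
    ∑ x ∈ Fintype.piFinset (fun _ => S), f x =
      ∑ a ∈ S, ∑ x ∈ Fintype.piFinset (fun _ : Fin n => S), f (Fin.cons a x) := by
  have h : Fintype.piFinset (fun _ => S) =
      (S ×ˢ Fintype.piFinset (fun _ : Fin n => S)).map (Fin.consEquiv fun _ => α).toEmbedding := by
    simpa [Fin.tail_def] using Finset.filter_piFinset_eq_map_consEquiv (fun _ => S) fun _ => True
  rw [h, sum_map, sum_product]
  rfl

theorem List.foldl_finRange_succ {α : Type*} {n : ℕ} (f : α → Fin (n + 1) → α) (a : α) :
    (List.finRange (n + 1)).foldl f a =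
      (List.finRange n).foldl (fun b i => f b i.succ) (f a 0) := by
  simp [List.finRange_succ, List.foldl_map]

namespace LinearMap

variable {R A : Type*} [CommSemiring R]

theorem mulLeftRight_mul_mulLeftRight [Semiring A] [Algebra R A] (a b c d : A) :
    mulLeftRight R (a, b) * mulLeftRight R (c, d) = mulLeftRight R (a * c, d * b) := by
  ext x
  simp [mul_assoc]

theorem mulLeftRight_mul_self_of_mul_self_eq_one [Semiring A] [Algebra R A] {q : A}
    (hq : q * q = 1) :
    mulLeftRight R (q, q) * mulLeftRight R (q, q) = 1 := by
  ext x
  simp [mulLeftRight_mul_mulLeftRight, hq]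

theorem commute_mulLeftRight [Ring A] [Algebra R A] {a b : A}
    (h : a * b = b * a ∨ a * b = -(b * a)) :
    Commute (mulLeftRight R (a, a)) (mulLeftRight R (b, b)) := by
  rw [Commute, SemiconjBy, mulLeftRight_mul_mulLeftRight, mulLeftRight_mul_mulLeftRight]
  rcases h with h | h
  · rw [h]
  · rw [h]
    ext x
    simp

end LinearMap

noncomputable section PEC

variable {M : Type*} [AddCommGroup M] [Module ℝ M] {N : ℕ}

def noiseChannel (C : Fin N → Module.End ℝ M) (p : Fin N → ℝ) (A : M) : M :=
  (List.finRange N).foldl (fun A i => (1 - p i) • A + p i • C i A) A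

def pecCorrection (C : Fin N → Module.End ℝ M) (σ : Fin N → ℝ) (A : M) : M :=
  (List.finRange N).foldl (fun A i => if σ i = -1 then C i A else A) A

def pecCoeff (p γ σ : Fin N → ℝ) : ℝ :=
  ∏ i, (if σ i = 1 then 1 - p i else p i) * (γ i * σ i)

theorem noiseChannel_succ (C : Fin (N + 1) → Module.End ℝ M) (p : Fin (N + 1) → ℝ) (A : M) :
    noiseChannel C p A =
      noiseChannel (Fin.tail C) (Fin.tail p) ((1 - p 0) • A + p 0 • C 0 A) :=
  List.foldl_finRange_succ _ _

theorem pecCorrection_cons (C : Fin (N + 1) → Module.End ℝ M) (s : ℝ) (τ : Fin N → ℝ) (A : M) :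
    pecCorrection C (Fin.cons s τ) A =
      pecCorrection (Fin.tail C) τ (if s = -1 then C 0 A else A) :=
  List.foldl_finRange_succ _ _

theorem pecCoeff_cons (p γ : Fin (N + 1) → ℝ) (s : ℝ) (τ : Fin N → ℝ) :
    pecCoeff p γ (Fin.cons s τ) =
      (if s = 1 then 1 - p 0 else p 0) * (γ 0 * s) * pecCoeff (Fin.tail p) (Fin.tail γ) τ :=
  Fin.prod_univ_succ _

theorem map_noiseChannel {C : Fin N → Module.End ℝ M} {D : Module.End ℝ M}
    (hD : ∀ i, Commute D (C i)) (p : Fin N → ℝ) (A : M) :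
    D (noiseChannel C p A) = noiseChannel C p (D A) := by
  refine (List.foldl_hom D fun B i => ?_).symm
  rw [map_add, map_smul, map_smul, ← Module.End.mul_apply (C i), ← (hD i).eq,
    Module.End.mul_apply]

theorem sum_sign_smul_correction_noise_eq_self {C : Module.End ℝ M} (hC : C * C = 1) {p γ : ℝ}
    (hγ : γ * (1 - 2 * p) = 1) (A : M) :
    ∑ s ∈ ({-1, 1} : Finset ℝ), ((if s = 1 then 1 - p else p) * (γ * s)) •
      (if s = -1 then C ((1 - p) • A + p • C A) else (1 - p) • A + p • C A) = A := by
  have hCC : C (C A) = A := by rw [← Module.End.mul_apply, hC, Module.End.one_apply]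
  rw [sum_pair (by norm_num)]
  simp only [if_pos, if_neg (show (-1 : ℝ) ≠ 1 by norm_num),
    if_neg (show (1 : ℝ) ≠ -1 by norm_num), map_add, map_smul, hCC]
  linear_combination (norm := module) hγ • A

theorem sum_pecCoeff_smul_pecCorrection_noiseChannel (C : Fin N → Module.End ℝ M)
    (hC : ∀ i, C i * C i = 1) (hcomm : ∀ i j, Commute (C i) (C j)) (p γ : Fin N → ℝ)
    (hγ : ∀ i, γ i * (1 - 2 * p i) = 1) (A : M) :
    ∑ σ ∈ Fintype.piFinset (fun _ : Fin N => ({-1, 1} : Finset ℝ)),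
      pecCoeff p γ σ • pecCorrection C σ (noiseChannel C p A) = A := by
  induction N generalizing A with
  | zero => simp [pecCoeff, pecCorrection, noiseChannel]
  | succ n ih =>
    have hswap (s : ℝ) (X : M) :
        (if s = -1 then C 0 (noiseChannel (Fin.tail C) (Fin.tail p) X)
          else noiseChannel (Fin.tail C) (Fin.tail p) X) =
        noiseChannel (Fin.tail C) (Fin.tail p) (if s = -1 then C 0 X else X) := by
      split_ifs
      · exact map_noiseChannel (fun j => hcomm 0 j.succ) _ X
      · rfl
    rw [Fin.sum_piFinset_const_succ, noiseChannel_succ]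
    conv_rhs => rw [← sum_sign_smul_correction_noise_eq_self (hC 0) (hγ 0) A]
    refine sum_congr rfl fun s _ => ?_
    simp_rw [pecCoeff_cons, pecCorrection_cons, hswap, mul_smul, ← smul_sum]
    rw [ih (Fin.tail C) (fun i => hC i.succ) (fun i j => hcomm i.succ j.succ) (Fin.tail p)
      (Fin.tail γ) (fun i => hγ i.succ)]

end PEC

theorem pec_estimator_unbiased_general (d N : ℕ)
    (Q : Fin N → Matrix (Fin d) (Fin d) ℂ)
    (hQ_unit : ∀ i, Q i * Q i = 1)
    (hQ_comm : ∀ i j, Q i * Q j = Q j * Q i ∨ Q i * Q j = -(Q j * Q i))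
    (p : Fin N → ℝ) (hp : ∀ i, p i ∈ Set.Ico (0 : ℝ) (1 / 2))
    (γ : Fin N → ℝ) (hγ : ∀ i, γ i = 1 / (1 - 2 * p i))
    (ρ O : Matrix (Fin d) (Fin d) ℂ) :
    ∑ σ ∈ Fintype.piFinset (fun _ : Fin N => ({-1, 1} : Finset ℝ)),
      ((∏ i, if σ i = 1 then 1 - p i else p i : ℝ) : ℂ) *
      ((∏ i, γ i * σ i : ℝ) : ℂ) *
      (ρ * (List.finRange N).foldl
          (fun A i => if σ i = -1 then Q i * A * Q i else A)
          ((List.finRange N).foldl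
            (fun A i => (1 - (p i : ℂ)) • A + (p i : ℂ) • (Q i * A * Q i)) O)).trace
      = (ρ * O).trace := by
  set C := fun i => LinearMap.mulLeftRight ℝ (Q i, Q i)
  have hγ' (i : Fin N) : γ i * (1 - 2 * p i) = 1 := by
    have : 1 - 2 * p i ≠ 0 := by linarith [(hp i).2]
    rw [hγ i, one_div, inv_mul_cancel₀ this]
  have hnoise : noiseChannel C p O = (List.finRange N).foldl
      (fun A i => (1 - (p i : ℂ)) • A + (p i : ℂ) • (Q i * A * Q i)) O := by
    simp only [noiseChannel, C, LinearMap.mulLeftRight_apply, ← Complex.coe_smul,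
      Complex.ofReal_sub, Complex.ofReal_one]
  calc _ = ∑ σ ∈ Fintype.piFinset (fun _ : Fin N => ({-1, 1} : Finset ℝ)),
        (ρ * (pecCoeff p γ σ • pecCorrection C σ (noiseChannel C p O))).trace := by
        refine sum_congr rfl fun σ _ => ?_
        rw [← Complex.ofReal_mul, ← prod_mul_distrib, Matrix.mul_smul, trace_smul,
          Complex.real_smul, hnoise]
        rfl
    _ = (ρ * O).trace := by
        rw [← trace_sum, ← Matrix.mul_sum, sum_pecCoeff_smul_pecCorrection_noiseChannel C
          (fun i => LinearMap.mulLeftRight_mul_self_of_mul_self_eq_one (hQ_unit i))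
          (fun i j => LinearMap.commute_mulLeftRight (hQ_comm i j)) p γ hγ' O]

/-- **Probabilistic error cancellation is unbiased.**
Let `Q 1, …, Q N` be Hermitian unitary `d×d` complex matrices which pairwise commute
or anticommute, `p i ∈ [0, 1/2)`, `γ i = 1/(1 − 2 p i)`, and `ρ, O` arbitrary `d×d`
complex matrices.  For `σ ∈ {−1, +1}^N` let `w σ = ∏ i, w_i (σ i)` with
`w_i (+1) = 1 − p i` and `w_i (−1) = p i`, let `C_σ` compose the conjugations
`A ↦ Q i A Q i` over the `i` with `σ i = −1` (in increasing `i`), and let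
`𝒩 = N_{Q N, p N} ∘ ⋯ ∘ N_{Q 1, p 1}`.  Then
`∑_σ w σ (∏ i, γ i σ i) Tr(ρ C_σ(𝒩 O)) = Tr(ρ O)`. -/
theorem pec_estimator_unbiased (d N : ℕ)
    (Q : Fin N → Matrix (Fin d) (Fin d) ℂ)
    (hQ_herm : ∀ i, (Q i)ᴴ = Q i) (hQ_unit : ∀ i, Q i * Q i = 1)
    (hQ_comm : ∀ i j, Q i * Q j = Q j * Q i ∨ Q i * Q j = -(Q j * Q i))
    (p : Fin N → ℝ) (hp : ∀ i, p i ∈ Set.Ico (0 : ℝ) (1 / 2))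
    (γ : Fin N → ℝ) (hγ : ∀ i, γ i = 1 / (1 - 2 * p i))
    (ρ O : Matrix (Fin d) (Fin d) ℂ) :
    ∑ σ ∈ Fintype.piFinset (fun _ : Fin N => ({-1, 1} : Finset ℝ)),
      ((∏ i, if σ i = 1 then 1 - p i else p i : ℝ) : ℂ) *
      ((∏ i, γ i * σ i : ℝ) : ℂ) *
      (ρ * (List.finRange N).foldl
          (fun A i => if σ i = -1 then Q i * A * Q i else A)
          ((List.finRange N).foldl
            (fun A i => (1 - (p i : ℂ)) • A + (p i : ℂ) • (Q i * A * Q i)) O)).trace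
      = (ρ * O).trace :=
  pec_estimator_unbiased_general d N Q hQ_unit hQ_comm p hp γ hγ ρ O
end

section
/- Let Q_1, …, Q_N be d×d Hermitian unitary complex matrices such that every pair Q_i, Q_j either commutes or anticommutes, let p_1, …, p_N ∈ [0, 1/2), γ_i = 1/(1 − 2p_i), and let μ ⊆ {1, …, N}. Let ρ and O be d×d complex matrices and suppose Q_i O Q_i = O for every i ∉ μ. For σ ∈ {−1, +1}^N let w(σ) = ∏_{i=1}^{N} w_i(σ_i) with w_i(+1) = 1 − p_i and w_i(−1) = p_i, let C_σ be the composition of the conjugation maps A ↦ Q_i A Q_i over all i with σ_i = −1 (in increasing order of i), and let 𝒩 = N_{Q_N,p_N} ∘ ⋯ ∘ N_{Q_1,p_1} where N_{Q_i,p_i}(A) = (1 − p_i) A + p_i Q_i A Q_i. Then ∑_{σ ∈ {−1,+1}^N} w(σ) · (∏_{i ∈ μ} γ_i σ_i) · Tr(ρ · C_σ(𝒩(O))) = Tr(ρ O). That is, the local PEC estimator, which rescales only by the factors γ_i σ_i for noise channels inside the light cone μ of the observable, is an unbiased estimator of the ideal expectation value. -/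
/-!
Conjugations `C_i : A ↦ Q_i A Q_i` by pairwise commuting or anticommuting involutions commute (the
signs cancel), so all channels and corrections live in a commutative algebra of operators. There
the weighted sum over sign configurations factorises over `i`: for `i ∈ μ` the factor is
`γ_i ((1 - p_i) - p_i C_i)`, the quasi-probability representation of the inverse of the Pauli
channel `(1 - p_i) + p_i C_i`, and for `i ∉ μ` it is the channel itself. Composed with the noise,
each factor becomes the identity (`i ∈ μ`) or the square of a channel fixing `O` (`i ∉ μ`, since
`C_i O = O`).
-/

open Matrix Finset
open scoped IsMulCommutative

section Conjugation

variable {R A : Type*} [CommSemiring R] [Ring A] [Algebra R A]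

theorem LinearMap.mulLeftRight_mul_self {q : A} (hq : q * q = 1) :
    mulLeftRight R (q, q) * mulLeftRight R (q, q) = 1 := by
  ext a
  simp only [Module.End.mul_apply, mulLeftRight_apply, Module.End.one_apply]
  rw [show q * (q * a * q) * q = (q * q) * a * (q * q) by noncomm_ring, hq, one_mul, mul_one]

theorem LinearMap.commute_mulLeftRight_s19 {q q' : A} (h : q * q' = q' * q ∨ q * q' = -(q' * q)) :
    Commute (mulLeftRight R (q, q)) (mulLeftRight R (q', q')) := by
  ext a
  simp only [Module.End.mul_apply, mulLeftRight_apply]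
  rw [show q * (q' * a * q') * q = (q * q') * a * (q' * q) by noncomm_ring,
    show q' * (q * a * q) * q' = (q' * q) * a * (q * q') by noncomm_ring]
  rcases h with h | h <;> simp [h]

end Conjugation

theorem List.foldl_smul_eq_prod_map_smul {ι M α : Type*} [CommMonoid M] [MulAction M α]
    (f : ι → M) (L : List ι) (a : α) :
    L.foldl (fun x i ↦ f i • x) a = (L.map f).prod • a := by
  induction L generalizing a with
  | nil => simp
  | cons i L ih => rw [List.foldl_cons, ih, List.map_cons, List.prod_cons, mul_comm, mul_smul]

theorem Finset.prod_smul_eq_self {ι M α : Type*} [CommMonoid M] [MulAction M α] (s : Finset ι)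
    {f : ι → M} {x : α} (h : ∀ i ∈ s, f i • x = x) : (∏ i ∈ s, f i) • x = x :=
  prod_induction f (· • x = x) (fun a b ha hb ↦ by rw [mul_smul, hb, ha]) (one_smul M x) h

section PauliChannel

variable {R B : Type*} [CommRing R] [Ring B] [Algebra R B]

/-- The Pauli channel `N_{Q,p}`, where `c` stands for the conjugation `A ↦ Q A Q`. -/
def pauliChannel (p : R) (c : B) : B := (1 - p) • 1 + p • c

def pecInverse (p γ : R) (c : B) : B := γ • ((1 - p) • 1 - p • c)

theorem pecInverse_mul_pauliChannel {p γ : R} (hγ : γ * (1 - 2 * p) = 1) {c : B}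
    (hc : c * c = 1) : pecInverse p γ c * pauliChannel p c = 1 := by
  have : pecInverse p γ c * pauliChannel p c = (γ * (1 - 2 * p)) • (1 : B) := by
    simp only [pecInverse, pauliChannel, sub_mul, mul_add, one_mul, mul_one, hc, smul_mul_assoc,
      mul_smul_comm, smul_sub]
    match_scalars <;> ring
  rw [this, hγ, one_smul]

variable {E : Type*} [AddCommGroup E] [Module R E] [Module B E] [IsScalarTower R B E]

theorem pauliChannel_smul (p : R) (c : B) (x : E) :
    pauliChannel p c • x = (1 - p) • x + p • c • x := by
  rw [pauliChannel, add_smul, smul_assoc, smul_assoc, one_smul]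

theorem pauliChannel_smul_of_smul_eq (p : R) {c : B} {x : E} (hx : c • x = x) :
    pauliChannel p c • x = x := by
  rw [pauliChannel_smul, hx, ← add_smul, sub_add_cancel, one_smul]

end PauliChannel

section Estimator

variable {ι B : Type*} [Fintype ι] [DecidableEq ι] [CommRing B] [Algebra ℂ B]

theorem sum_signs_smul_prod_ite_eq_prod (c : ι → B) (p γ : ι → ℝ) (μ : Finset ι) :
    ∑ σ ∈ Fintype.piFinset (fun _ : ι => ({-1, 1} : Finset ℝ)),
      ((∏ i, if σ i = 1 then 1 - p i else p i : ℝ) : ℂ) • ((∏ i ∈ μ, γ i * σ i : ℝ) : ℂ) •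
        ∏ i, (if σ i = -1 then c i else 1)
      = ∏ i, if i ∈ μ then pecInverse (p i : ℂ) (γ i) (c i) else pauliChannel (p i : ℂ) (c i) := by
  set f : ι → ℝ → B := fun i s ↦
    (((if s = 1 then 1 - p i else p i) * (if i ∈ μ then γ i * s else 1) : ℝ) : ℂ) •
      (if s = -1 then c i else 1)
  have hfactor : ∀ i, (if i ∈ μ then pecInverse (p i : ℂ) (γ i) (c i)
      else pauliChannel (p i : ℂ) (c i)) = ∑ s ∈ ({-1, 1} : Finset ℝ), f i s := by
    intro i
    have hne : (-1 : ℝ) ≠ 1 := by norm_num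
    rw [sum_pair hne]
    by_cases hi : i ∈ μ <;>
      simp only [f, pecInverse, pauliChannel, hi, hne, hne.symm, ↓reduceIte] <;>
      push_cast <;> match_scalars <;> ring
  rw [prod_congr rfl fun i _ ↦ hfactor i, prod_univ_sum]
  refine sum_congr rfl fun σ _ ↦ ?_
  rw [prod_smul, smul_smul, ← Complex.ofReal_mul, ← Complex.ofReal_prod,
    prod_mul_distrib (s := univ), prod_ite_mem, univ_inter]

variable {E : Type*} [AddCommGroup E] [Module ℂ E] [Module B E] [IsScalarTower ℂ B E]

theorem sum_signs_smul_corrections_smul_channels_eq_self (c : ι → B) (hc : ∀ i, c i * c i = 1)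
    (p γ : ι → ℝ) (hγ : ∀ i, γ i * (1 - 2 * p i) = 1) (μ : Finset ι) (O : E)
    (hO : ∀ i ∉ μ, c i • O = O) :
    ∑ σ ∈ Fintype.piFinset (fun _ : ι => ({-1, 1} : Finset ℝ)),
      ((∏ i, if σ i = 1 then 1 - p i else p i : ℝ) : ℂ) • ((∏ i ∈ μ, γ i * σ i : ℝ) : ℂ) •
        (∏ i, (if σ i = -1 then c i else 1)) • (∏ i, pauliChannel (p i : ℂ) (c i)) • O = O := by
  have hassoc : ∀ (a b : ℂ) (X : B) (x : E), a • b • X • x = (a • b • X) • x := fun a b X x ↦ by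
    rw [smul_assoc, smul_assoc]
  simp only [hassoc]
  rw [← sum_smul, sum_signs_smul_prod_ite_eq_prod, ← mul_smul, ← prod_mul_distrib]
  refine prod_smul_eq_self _ fun i _ ↦ ?_
  split_ifs with hi
  · rw [pecInverse_mul_pauliChannel (by exact_mod_cast hγ i) (hc i), one_smul]
  · rw [mul_smul, pauliChannel_smul_of_smul_eq _ (hO i hi),
      pauliChannel_smul_of_smul_eq _ (hO i hi)]

end Estimator

theorem local_pec_estimator_unbiased_general (d N : ℕ)
    (Q : Fin N → Matrix (Fin d) (Fin d) ℂ)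
    (hQ_unit : ∀ i, Q i * Q i = 1)
    (hQ_comm : ∀ i j, Q i * Q j = Q j * Q i ∨ Q i * Q j = -(Q j * Q i))
    (p : Fin N → ℝ) (hp : ∀ i, p i ∈ Set.Ico (0 : ℝ) (1 / 2))
    (γ : Fin N → ℝ) (hγ : ∀ i, γ i = 1 / (1 - 2 * p i))
    (μ : Finset (Fin N))
    (ρ O : Matrix (Fin d) (Fin d) ℂ)
    (hμ : ∀ i ∉ μ, Q i * O * Q i = O) :
    ∑ σ ∈ Fintype.piFinset (fun _ : Fin N => ({-1, 1} : Finset ℝ)),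
      ((∏ i, if σ i = 1 then 1 - p i else p i : ℝ) : ℂ) *
      ((∏ i ∈ μ, γ i * σ i : ℝ) : ℂ) *
      (ρ * (List.finRange N).foldl
          (fun A i => if σ i = -1 then Q i * A * Q i else A)
          ((List.finRange N).foldl
            (fun A i => (1 - (p i : ℂ)) • A + (p i : ℂ) • (Q i * A * Q i)) O)).trace
      = (ρ * O).trace := by
  let C : Fin N → Module.End ℂ (Matrix (Fin d) (Fin d) ℂ) := fun i ↦
    LinearMap.mulLeftRight ℂ (Q i, Q i)
  have : IsMulCommutative (Algebra.adjoin ℂ (Set.range C)) :=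
    Algebra.isMulCommutative_adjoin ℂ <| by
      rintro _ ⟨i, rfl⟩ _ ⟨j, rfl⟩
      exact (LinearMap.commute_mulLeftRight_s19 (hQ_comm i j)).eq
  let c : Fin N → Algebra.adjoin ℂ (Set.range C) := fun i ↦ ⟨C i, Algebra.subset_adjoin ⟨i, rfl⟩⟩
  have hc_smul : ∀ i A, c i • A = Q i * A * Q i := fun _ _ ↦ rfl
  have hchannel : (List.finRange N).foldl
      (fun A i => (1 - (p i : ℂ)) • A + (p i : ℂ) • (Q i * A * Q i)) O
        = (∏ i, pauliChannel (p i : ℂ) (c i)) • O := by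
    simp only [Fin.prod_univ_def, ← List.foldl_smul_eq_prod_map_smul, pauliChannel_smul, hc_smul]
  have hcorrection : ∀ (σ : Fin N → ℝ) X, (List.finRange N).foldl
      (fun A i => if σ i = -1 then Q i * A * Q i else A) X
        = (∏ i, if σ i = -1 then c i else 1) • X := by
    intro σ X
    simp only [Fin.prod_univ_def, ← List.foldl_smul_eq_prod_map_smul, ite_smul, one_smul, hc_smul]
  have hγp : ∀ i, γ i * (1 - 2 * p i) = 1 := fun i ↦ by
    rw [hγ, one_div, inv_mul_cancel₀]
    linarith [(hp i).2]
  have hc : ∀ i, c i * c i = 1 := fun i ↦ Subtype.ext (LinearMap.mulLeftRight_mul_self (hQ_unit i))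
  conv_rhs => rw [← sum_signs_smul_corrections_smul_channels_eq_self c hc p γ hγp μ O hμ]
  simp_rw [hchannel, hcorrection, Matrix.mul_sum, Matrix.trace_sum, Matrix.mul_smul,
    Matrix.trace_smul, smul_eq_mul, mul_assoc]

/-- **The local (light-cone) PEC estimator is unbiased.**
Let `Q 1, …, Q N` be Hermitian unitary `d×d` complex matrices which pairwise commute
or anticommute, `p i ∈ [0, 1/2)`, `γ i = 1/(1 − 2 p i)`, `μ ⊆ {1, …, N}`, and `ρ, O`
`d×d` complex matrices with `Q i O Q i = O` for every `i ∉ μ` (channels outside the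
light cone act trivially on `O`).  For `σ ∈ {−1, +1}^N` let `w σ = ∏ i, w_i (σ i)`
with `w_i (+1) = 1 − p i` and `w_i (−1) = p i`, let `C_σ` compose the conjugations
`A ↦ Q i A Q i` over the `i` with `σ i = −1` (in increasing `i`), and let
`𝒩 = N_{Q N, p N} ∘ ⋯ ∘ N_{Q 1, p 1}`.  Then the local PEC estimator, rescaling only
by the factors inside the light cone, is unbiased:
`∑_σ w σ (∏_{i ∈ μ} γ i σ i) Tr(ρ C_σ(𝒩 O)) = Tr(ρ O)`. -/
theorem local_pec_estimator_unbiased (d N : ℕ)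
    (Q : Fin N → Matrix (Fin d) (Fin d) ℂ)
    (hQ_herm : ∀ i, (Q i)ᴴ = Q i) (hQ_unit : ∀ i, Q i * Q i = 1)
    (hQ_comm : ∀ i j, Q i * Q j = Q j * Q i ∨ Q i * Q j = -(Q j * Q i))
    (p : Fin N → ℝ) (hp : ∀ i, p i ∈ Set.Ico (0 : ℝ) (1 / 2))
    (γ : Fin N → ℝ) (hγ : ∀ i, γ i = 1 / (1 - 2 * p i))
    (μ : Finset (Fin N))
    (ρ O : Matrix (Fin d) (Fin d) ℂ)
    (hμ : ∀ i ∉ μ, Q i * O * Q i = O) :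
    ∑ σ ∈ Fintype.piFinset (fun _ : Fin N => ({-1, 1} : Finset ℝ)),
      ((∏ i, if σ i = 1 then 1 - p i else p i : ℝ) : ℂ) *
      ((∏ i ∈ μ, γ i * σ i : ℝ) : ℂ) *
      (ρ * (List.finRange N).foldl
          (fun A i => if σ i = -1 then Q i * A * Q i else A)
          ((List.finRange N).foldl
            (fun A i => (1 - (p i : ℂ)) • A + (p i : ℂ) • (Q i * A * Q i)) O)).trace
      = (ρ * O).trace :=
  local_pec_estimator_unbiased_general d N Q hQ_unit hQ_comm p hp γ hγ μ ρ O hμ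
end
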